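/- arXiv:2511.21954 — 4 statements merged into one kernel-verified Lean document; each statement's English description precedes it below -/
import Mathlib

section
/- Any two structures satisfying the second-order ℤ-order axioms are order-isomorphic: if (L₁, ≤₁) and (L₂, ≤₂) are nonempty discrete linear orders in which every element has an immediate successor and predecessor, and which satisfy full second-order upward induction from any point under successor and downward induction under predecessor, then L₁ ≅ L₂ as ordered sets. -/
theorem aux_Z_iso {L : Type} [LinearOrder L] [Nonempty L]
    (S P : L → L)
    (hS : ∀ x : L, IsLeast {y | x < y} (S x))
    (hP : ∀ x : L, IsGreatest {y | y < x} (P x))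
    (indUp : ∀ (X : Set L) (x : L), x ∈ X → (∀ y ∈ X, S y ∈ X) →
      ∀ z, x ≤ z → z ∈ X)
    (indDown : ∀ (X : Set L) (x : L), x ∈ X → (∀ y ∈ X, P y ∈ X) →
      ∀ z, z ≤ x → z ∈ X) :
    Nonempty (ℤ ≃o L) := by
  have PS : ∀ x, P (S x) = x := fun x =>
    (hP (S x)).unique ⟨(hS x).1, fun y hy => not_lt.mp fun h => absurd ((hS x).2 h) (not_le.mpr hy)⟩
  have SP : ∀ x, S (P x) = x := fun x =>
    (hS (P x)).unique ⟨(hP x).1, fun y hy => not_lt.mp fun h => absurd ((hP x).2 h) (not_le.mpr hy)⟩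
  obtain ⟨a⟩ := ‹Nonempty L›
  set f : ℤ → L := fun n => S^[n.toNat] (P^[(-n).toNat] a) with hf
  have key : ∀ n : ℤ, f (n + 1) = S (f n) := by
    intro n
    rcases le_or_gt 0 n with h | h
    · have h1 : (n + 1).toNat = n.toNat + 1 := by omega
      have h3 : (-n).toNat = 0 := by omega
      have h2 : (-1 + -n).toNat = 0 := by omega
      simp [hf, h1, h2, h3, Function.iterate_succ_apply']
    · have h1 : (n + 1).toNat = 0 := by omega
      have h2 : n.toNat = 0 := by omega
      have h3 : (-n).toNat = (-1 + -n).toNat + 1 := by omega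
      simp [hf, h1, h2, h3, Function.iterate_succ_apply', SP]
  have mono : StrictMono f := by
    apply strictMono_int_of_lt_succ
    intro n
    rw [key n]
    exact (hS (f n)).1
  have keyP : ∀ n : ℤ, f (n - 1) = P (f n) := by
    intro n
    have := key (n - 1)
    rw [sub_add_cancel] at this
    rw [this, PS]
  have surj : Function.Surjective f := by
    intro z
    have hXS : ∀ w ∈ Set.range f, S w ∈ Set.range f := by
      rintro w ⟨n, rfl⟩; exact ⟨n + 1, key n⟩
    have hXP : ∀ w ∈ Set.range f, P w ∈ Set.range f := by
      rintro w ⟨n, rfl⟩; exact ⟨n - 1, keyP n⟩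
    have h0 : a ∈ Set.range f := ⟨0, by simp [hf]⟩
    rcases le_total z a with h | h
    · exact indDown _ a h0 hXP z h
    · exact indUp _ a h0 hXS z h
  exact ⟨StrictMono.orderIsoOfSurjective f mono surj⟩

/-- Categoricity of the canonical second-order theory of `(ℤ, ≤)`: any two nonempty
discrete linear orders (every element has an immediate successor `S` and immediate
predecessor `P`) satisfying full second-order upward induction under `S` and downward
induction under `P` are order-isomorphic. -/
theorem second_order_Z_order_categorical {L₁ L₂ : Type}
    [LinearOrder L₁] [LinearOrder L₂] [Nonempty L₁] [Nonempty L₂]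
    (S₁ P₁ : L₁ → L₁) (S₂ P₂ : L₂ → L₂)
    (hS₁ : ∀ x : L₁, IsLeast {y | x < y} (S₁ x))
    (hP₁ : ∀ x : L₁, IsGreatest {y | y < x} (P₁ x))
    (hS₂ : ∀ x : L₂, IsLeast {y | x < y} (S₂ x))
    (hP₂ : ∀ x : L₂, IsGreatest {y | y < x} (P₂ x))
    (indUp₁ : ∀ (X : Set L₁) (x : L₁), x ∈ X → (∀ y ∈ X, S₁ y ∈ X) →
      ∀ z, x ≤ z → z ∈ X)
    (indDown₁ : ∀ (X : Set L₁) (x : L₁), x ∈ X → (∀ y ∈ X, P₁ y ∈ X) →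
      ∀ z, z ≤ x → z ∈ X)
    (indUp₂ : ∀ (X : Set L₂) (x : L₂), x ∈ X → (∀ y ∈ X, S₂ y ∈ X) →
      ∀ z, x ≤ z → z ∈ X)
    (indDown₂ : ∀ (X : Set L₂) (x : L₂), x ∈ X → (∀ y ∈ X, P₂ y ∈ X) →
      ∀ z, z ≤ x → z ∈ X) :
    Nonempty (L₁ ≃o L₂) := by
  obtain ⟨e₁⟩ := aux_Z_iso S₁ P₁ hS₁ hP₁ indUp₁ indDown₁
  obtain ⟨e₂⟩ := aux_Z_iso S₂ P₂ hS₂ hP₂ indUp₂ indDown₂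
  exact ⟨e₁.symm.trans e₂⟩
end

section
/- There exist two structures of the same cardinality, each consisting of hereditarily finite sets over a continuum-sized set of atoms equipped with a linear order on the atoms, that satisfy the same hereditarily-finite-set axioms with atoms densely ordered without endpoints, but are not isomorphic: take the atom order of type ℝ ⊕ ℚ in one and its reverse in the other. -/
/-- A model of the hereditarily finite sets over a type `A` of atoms: atoms are
memberless and injectively embedded, extensionality holds for non-atoms (sets), every
element has finitely many members, every finite collection of elements is the extension
of some set, and the whole universe satisfies ∈-induction (minimality). -/
structure HFModel (A : Type) where
  H : Type
  mem : H → H → Prop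
  atom : A → H
  atom_inj : Function.Injective atom
  mem_atom : ∀ (a : A) (x : H), ¬ mem x (atom a)
  ext : ∀ x y : H, (∀ a, x ≠ atom a) → (∀ a, y ≠ atom a) →
    (∀ z, mem z x ↔ mem z y) → x = y
  finite_mem : ∀ x : H, {z | mem z x}.Finite
  exists_set : ∀ s : Set H, s.Finite →
    ∃ x : H, (∀ a, x ≠ atom a) ∧ ∀ z, mem z x ↔ z ∈ s
  minimal : ∀ P : Set H, (∀ a, atom a ∈ P) →
    (∀ x, (∀ a, x ≠ atom a) → (∀ z, mem z x → z ∈ P) → x ∈ P) → ∀ x, x ∈ P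

/-!
HF(ℝ) is realised by Mathlib's `Finsets ℝ`, the extensional quotient of ZFA lists.
The order `ℝ ⊕ₗ ℚ` is not anti-isomorphic to itself: above `inr q` lies only a countable
set, while below every point lies an uncountable one, and an order-reversing bijection
would carry the former onto the latter.
-/

open Set

namespace Finsets

local infixl:50 " ~ " => Lists.Equiv

variable {α : Type*}

theorem _root_.Lists.mem_iff_of_equiv {a a' l l' : Lists α} (ha : a ~ a') (hl : l ~ l') :
    a ∈ l ↔ a' ∈ l' := by
  cases hl with
  | refl l =>
    obtain ⟨_ | _, l⟩ := l
    · exact Iff.rfl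
    · exact Lists'.mem_equiv_left ha
  | antisymm h₁ h₂ =>
    exact ⟨fun h => Lists'.mem_of_subset h₁ ((Lists'.mem_equiv_left ha).1 h),
      fun h => Lists'.mem_of_subset h₂ ((Lists'.mem_equiv_left ha.symm).1 h)⟩

def Mem (x y : Finsets α) : Prop :=
  Quotient.lift₂ (fun a l : Lists α => a ∈ l)
    (fun _ _ _ _ ha hl => propext (Lists.mem_iff_of_equiv ha hl)) x y

def atom (a : α) : Finsets α := ⟦Lists.atom a⟧

theorem atom_injective : Function.Injective (atom (α := α)) := by
  intro a b h
  have h' : Lists.atom a = Lists.atom b := Lists.equiv_atom.1 (Quotient.exact h)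
  injection h' with _ h''
  injection h''

theorem not_mem_atom (a : α) (x : Finsets α) : ¬ Mem x (atom a) := by
  induction x using Quotient.ind
  exact id

theorem mk_of'_ne_atom (l : Lists' α true) (a : α) : (⟦Lists.of' l⟧ : Finsets α) ≠ atom a := by
  intro h
  have h' : Lists.atom a = Lists.of' l := Lists.equiv_atom.1 (Quotient.exact h).symm
  exact Bool.noConfusion (congrArg Sigma.fst h')

theorem ext_of_ne_atom (x y : Finsets α) (hx : ∀ a, x ≠ atom a) (hy : ∀ a, y ≠ atom a)
    (h : ∀ z, Mem z x ↔ Mem z y) : x = y := by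
  induction x using Quotient.ind with | _ u =>
  induction y using Quotient.ind with | _ v =>
  obtain ⟨_ | _, u⟩ := u
  · cases u with | atom a => exact absurd rfl (hx a)
  obtain ⟨_ | _, v⟩ := v
  · cases v with | atom a => exact absurd rfl (hy a)
  refine Quotient.sound (Lists.Equiv.antisymm ?_ ?_) <;>
    refine Lists'.subset_def.2 fun z hz => ?_
  · exact (h ⟦z⟧).1 ⟨z, hz, Lists.Equiv.refl z⟩
  · exact (h ⟦z⟧).2 ⟨z, hz, Lists.Equiv.refl z⟩

theorem finite_setOf_mem (x : Finsets α) : {z | Mem z x}.Finite := by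
  induction x using Quotient.ind with | _ u =>
  refine (u.toList.finite_toSet.image (fun w : Lists α => (⟦w⟧ : Finsets α))).subset ?_
  intro z hz
  induction z using Quotient.ind with | _ w =>
  obtain ⟨_ | _, u⟩ := u
  · exact hz.elim
  · obtain ⟨w', hw', he⟩ := (hz : w ∈ u)
    exact ⟨w', hw', Quotient.sound he.symm⟩

theorem exists_ne_atom_mem_iff (s : Set (Finsets α)) (hs : s.Finite) :
    ∃ x : Finsets α, (∀ a, x ≠ atom a) ∧ ∀ z, Mem z x ↔ z ∈ s := by
  refine ⟨⟦Lists.ofList (hs.toFinset.toList.map (Quotient.out : Finsets α → Lists α))⟧,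
    mk_of'_ne_atom _, fun z => ?_⟩
  induction z using Quotient.ind with | _ w =>
  change w ∈ Lists'.ofList _ ↔ _
  rw [Lists'.mem_def, Lists'.to_ofList]
  constructor
  · rintro ⟨_, hmap, he⟩
    obtain ⟨y, hy, rfl⟩ := List.mem_map.1 hmap
    rw [show (⟦w⟧ : Finsets α) = y from (Quotient.sound he).trans (Quotient.out_eq y)]
    exact hs.mem_toFinset.1 (Finset.mem_toList.1 hy)
  · intro hz
    exact ⟨_, List.mem_map_of_mem (Finset.mem_toList.2 (hs.mem_toFinset.2 hz)),
      Quotient.exact (Quotient.out_eq (⟦w⟧ : Finsets α)).symm⟩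

theorem mem_induction (P : Set (Finsets α)) (hatom : ∀ a, atom a ∈ P)
    (hset : ∀ x, (∀ a, x ≠ atom a) → (∀ z, Mem z x → z ∈ P) → x ∈ P) (x : Finsets α) :
    x ∈ P := by
  have key : PProd (∀ l : Lists α, (⟦l⟧ : Finsets α) ∈ P)
      (∀ l : Lists' α true, ∀ w ∈ l.toList, (⟦w⟧ : Finsets α) ∈ P) := by
    apply Lists.inductionMut
    · exact hatom
    · intro l hl
      refine hset _ (mk_of'_ne_atom l) fun z hz => ?_
      induction z using Quotient.ind with | _ w =>
      obtain ⟨w', hw', he⟩ := (hz : w ∈ l)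
      rw [Quotient.sound he]
      exact hl w' hw'
    · exact fun w hw => (List.not_mem_nil hw).elim
    · rintro ⟨_, a⟩ l ha hl w hw
      rcases List.mem_cons.1 hw with rfl | h
      · exact ha
      · exact hl w h
  induction x using Quotient.ind with | _ u =>
  exact key.1 u

def hfModel (α : Type) : HFModel α where
  H := Finsets α
  mem := Mem
  atom := atom
  atom_inj := atom_injective
  mem_atom := not_mem_atom
  ext := ext_of_ne_atom
  finite_mem := finite_setOf_mem
  exists_set := exists_ne_atom_mem_iff
  minimal := mem_induction

end Finsets

section AntiAutomorphism

variable {α β : Type*} [Preorder α] [Preorder β]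

theorem Equiv.image_Ioi_eq_Iio_of_lt_iff (h : α ≃ β) (hh : ∀ x y, x < y ↔ h y < h x) (x : α) :
    h '' Ioi x = Iio (h x) := by
  ext y
  constructor
  · rintro ⟨z, hz, rfl⟩
    exact (hh x z).1 hz
  · intro hy
    exact ⟨h.symm y, (hh _ _).2 (by simpa using hy), h.apply_symm_apply y⟩

theorem not_exists_equiv_reversing_lt_of_countable_Ioi {x : α} (hx : (Ioi x).Countable)
    (hIio : ∀ y : α, ¬ (Iio y).Countable) : ¬ ∃ h : α ≃ α, ∀ x y, x < y ↔ h y < h x := by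
  rintro ⟨h, hh⟩
  exact hIio (h x) (h.image_Ioi_eq_Iio_of_lt_iff hh x ▸ hx.image h)

theorem Sum.Lex.countable_Ioi_inr [Countable β] (b : β) :
    (Ioi (toLex (Sum.inr b) : α ⊕ₗ β)).Countable := by
  refine (countable_range (toLex ∘ Sum.inr : β → α ⊕ₗ β)).mono fun x hx => ?_
  rcases x with a | b'
  · exact absurd hx Sum.Lex.not_inr_lt_inl
  · exact ⟨b', rfl⟩

theorem Sum.Lex.not_countable_Iio [Nonempty α] (hα : ∀ a : α, ¬ (Iio a).Countable)
    (x : α ⊕ₗ β) : ¬ (Iio x).Countable := by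
  obtain ⟨a, ha⟩ : ∃ a : α, Iio a ⊆ (toLex ∘ Sum.inl) ⁻¹' Iio x := by
    rcases x with a | b
    · exact ⟨a, fun _ => Sum.Lex.inl_lt_inl_iff.2⟩
    · exact ⟨Classical.arbitrary α, fun a' _ => Sum.Lex.inl_lt_inr a' b⟩
  exact fun hx => hα a ((hx.preimage (toLex.injective.comp Sum.inl_injective)).mono ha)

end AntiAutomorphism

theorem Real.not_countable_Iio (a : ℝ) : ¬ (Iio a).Countable := by
  rw [← Cardinal.le_aleph0_iff_set_countable, Cardinal.mk_Iio_real, not_le]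
  exact Cardinal.aleph0_lt_continuum

theorem nonempty_equiv_real_lex_rat : Nonempty (ℝ ≃ ℝ ⊕ₗ ℚ) := by
  rw [← Cardinal.eq, Cardinal.mk_congr toLex.symm, Cardinal.mk_sum, Cardinal.mk_real,
    Cardinal.mk_denumerable ℚ, Cardinal.lift_id, Cardinal.lift_id, Cardinal.continuum_add_aleph0]

/-- There are two structures with the same underlying set (hence the same cardinality),
both consisting of the hereditarily finite sets over a continuum of atoms with the atoms
densely linearly ordered without endpoints, which are not isomorphic: order the atoms in
type `ℝ ⊕ ℚ` in one structure and reversely in the other. -/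
theorem hf_dense_atom_orders_not_isomorphic :
    ∃ (M : HFModel ℝ) (lt₁ : ℝ → ℝ → Prop),
      -- `lt₁` has order type `ℝ ⊕ ℚ`
      (∃ e : ℝ ≃ (ℝ ⊕ₗ ℚ), ∀ a b : ℝ, lt₁ a b ↔ e a < e b) ∧
      -- `lt₁` is a dense order without endpoints on the atoms
      (∀ a b : ℝ, lt₁ a b → ∃ c, lt₁ a c ∧ lt₁ c b) ∧
      (∀ a : ℝ, ∃ b, lt₁ a b) ∧ (∀ a : ℝ, ∃ b, lt₁ b a) ∧
      -- the structures `(HF(ℝ), ∈, lt₁, ℝ)` and `(HF(ℝ), ∈, lt₁⁻¹, ℝ)` are not isomorphic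
      ¬ ∃ (F : M.H ≃ M.H) (g : ℝ ≃ ℝ),
          (∀ x y : M.H, M.mem x y ↔ M.mem (F x) (F y)) ∧
          (∀ a : ℝ, F (M.atom a) = M.atom (g a)) ∧
          (∀ a b : ℝ, lt₁ a b ↔ lt₁ (g b) (g a)) := by
  obtain ⟨e⟩ := nonempty_equiv_real_lex_rat
  refine ⟨Finsets.hfModel ℝ, fun a b => e a < e b, ⟨e, fun _ _ => Iff.rfl⟩, ?_, ?_, ?_, ?_⟩
  · intro a b hab
    obtain ⟨c, hac, hcb⟩ := exists_between hab
    exact ⟨e.symm c, by simpa using hac, by simpa using hcb⟩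
  · intro a
    obtain ⟨y, hy⟩ := exists_gt (e a)
    exact ⟨e.symm y, by simpa using hy⟩
  · intro a
    obtain ⟨y, hy⟩ := exists_lt (e a)
    exact ⟨e.symm y, by simpa using hy⟩
  · rintro ⟨-, g, -, -, hg⟩
    refine not_exists_equiv_reversing_lt_of_countable_Ioi (Sum.Lex.countable_Ioi_inr (0 : ℚ))
      (Sum.Lex.not_countable_Iio Real.not_countable_Iio) ⟨e.symm.trans (g.trans e), ?_⟩
    intro x y
    simpa using hg (e.symm x) (e.symm y)
end

section
/- In a theory with only the empty-set axiom and the adjunction axiom (for all x, y there exists z whose elements are exactly the elements of x together with y), possibly without extensionality: for every x, y there exists a set coding the Kuratowski pair ⟨x, y⟩, i.e., a set z such that the elements of z are exactly the sets {x} and {x, y} up to extensional equivalence. -/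
/-- In adjunctive set theory `AS` (empty set plus adjunction, without extensionality),
every two elements `x`, `y` have a Kuratowski pair: an element `z` whose members are
exactly of the two kinds "a set whose sole member is `x`" and "a set whose members are
exactly `x` and `y`", with members of both kinds present. -/
theorem AS_kuratowski_pair {V : Type*} (mem : V → V → Prop)
    (h_empty : ∃ e : V, ∀ w, ¬ mem w e)
    (h_adj : ∀ x y : V, ∃ z : V, ∀ w, mem w z ↔ (mem w x ∨ w = y)) :
    ∀ x y : V, ∃ z : V,
      (∀ w, mem w z →
        (∀ u, mem u w ↔ u = x) ∨ (∀ u, mem u w ↔ (u = x ∨ u = y))) ∧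
      (∃ w, mem w z ∧ ∀ u, mem u w ↔ u = x) ∧
      (∃ w, mem w z ∧ ∀ u, mem u w ↔ (u = x ∨ u = y)) := by
  intro x y
  obtain ⟨e, he⟩ := h_empty
  obtain ⟨sx, hsx⟩ := h_adj e x
  have hsx' : ∀ u, mem u sx ↔ u = x := by
    intro u; rw [hsx]; constructor
    · rintro (h | h); exacts [absurd h (he u), h]
    · exact Or.inr
  obtain ⟨sxy, hsxy⟩ := h_adj sx y
  have hsxy' : ∀ u, mem u sxy ↔ (u = x ∨ u = y) := by
    intro u; rw [hsxy, hsx' u]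
  obtain ⟨p1, hp1⟩ := h_adj e sx
  have hp1' : ∀ w, mem w p1 ↔ w = sx := by
    intro w; rw [hp1]; constructor
    · rintro (h | h); exacts [absurd h (he w), h]
    · exact Or.inr
  obtain ⟨p, hp⟩ := h_adj p1 sxy
  refine ⟨p, ?_, ⟨sx, ?_, hsx'⟩, ⟨sxy, ?_, hsxy'⟩⟩
  · intro w hw
    rcases (hp w).1 hw with h | h
    · left; rw [(hp1' w).1 h]; exact hsx'
    · right; rw [h]; exact hsxy'
  · exact (hp sx).2 (Or.inl ((hp1' sx).2 rfl))
  · exact (hp sxy).2 (Or.inr rfl)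
end

section
/- For any two infinite sets A and B each equipped with a dense linear order without endpoints, the structures (HF(A), ∈, <_A, A) and (HF(B), ∈, <_B, B) are elementarily equivalent. -/
open FirstOrder Language

/-- The language of hereditarily finite sets over ordered atoms: a unary predicate for
being an atom and two binary relations (membership and the order on atoms). -/
@[reducible] def hfLang : FirstOrder.Language where
  Functions := fun _ => Empty
  Relations := fun n => match n with
    | 1 => Unit
    | 2 => Fin 2
    | _ => Empty

/-- The `hfLang`-structure on `HF(A)`: the atom predicate, membership, and the order on
atoms. -/
def hfStructure {A : Type} [LT A] (M : HFModel A) : hfLang.Structure M.H where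
  funMap := fun {n} f _ => f.elim
  RelMap := fun {n} r v =>
    match n, r, v with
    | 1, _, v => ∃ a, v 0 = M.atom a
    | 2, i, v =>
        @ite _ (i = (0 : Fin 2)) (instDecidableEqFin 2 i 0) (M.mem (v 0) (v 1))
          (∃ a b : A, v 0 = M.atom a ∧ v 1 = M.atom b ∧ a < b)
    | _ + 3, r, _ => r.elim
    | 0, r, _ => r.elim

open Set

section Order

variable {α β : Type*} [Preorder α] [LinearOrder β] {f : α → β} {s t : Set α}

theorem StrictMonoOn.exists_extend_insert [DenselyOrdered β] [NoMinOrder β] [NoMaxOrder β]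
    [Nonempty β] (hs : s.Finite) (hf : StrictMonoOn f s) (a : α) :
    ∃ g : α → β, StrictMonoOn g (insert a s) ∧ EqOn g f s := by
  classical
  by_cases ha : a ∈ s
  · exact ⟨f, by rwa [insert_eq_of_mem ha], eqOn_refl f s⟩
  obtain ⟨b, hlt, hgt⟩ := ((hs.inter_of_left {x | x < a}).image f).exists_between'
    ((hs.inter_of_left {x | a < x}).image f) (by
      rintro _ ⟨x, ⟨hx, hxa⟩, rfl⟩ _ ⟨y, ⟨hy, hay⟩, rfl⟩
      exact hf hx hy (hxa.trans hay))
  have hupd : EqOn (Function.update f a b) f s := fun x hx =>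
    Function.update_of_ne (ne_of_mem_of_not_mem hx ha) _ _
  refine ⟨Function.update f a b, strictMonoOn_insert_iff.2 ⟨?_, ?_, hf.congr hupd.symm⟩, hupd⟩
  · intro x hx hxa
    rw [Function.update_self, hupd hx]
    exact hlt _ ⟨x, ⟨hx, hxa⟩, rfl⟩
  · intro x hx hax
    rw [Function.update_self, hupd hx]
    exact hgt _ ⟨x, ⟨hx, hax⟩, rfl⟩

theorem StrictMonoOn.exists_extend [DenselyOrdered β] [NoMinOrder β] [NoMaxOrder β]
    [Nonempty β] (hs : s.Finite) (ht : t.Finite) (hf : StrictMonoOn f s) :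
    ∃ g : α → β, StrictMonoOn g (s ∪ t) ∧ EqOn g f s := by
  induction t, ht using Set.Finite.induction_on with
  | empty => exact ⟨f, by rwa [union_empty], eqOn_refl f s⟩
  | @insert a t _ ht ih =>
    obtain ⟨g, hg, hgf⟩ := ih
    obtain ⟨g', hg', hg'g⟩ := hg.exists_extend_insert (hs.union ht) a
    exact ⟨g', by rwa [union_insert], (hg'g.mono subset_union_left).trans hgf⟩

theorem StrictMonoOn.invFunOn {α : Type*} [LinearOrder α] [Nonempty α] {s : Set α} {f : α → β} (hf : StrictMonoOn f s) :
    StrictMonoOn (Function.invFunOn f s) (f '' s) := by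
  rintro _ ⟨a, ha, rfl⟩ _ ⟨b, hb, rfl⟩ hab
  rwa [hf.injOn.leftInvOn_invFunOn ha, hf.injOn.leftInvOn_invFunOn hb, ← hf.lt_iff_lt ha hb]

end Order

namespace HFModel

variable {A B C : Type} {M : HFModel A} {N : HFModel B}

variable (M) in
def IsAtom (x : M.H) : Prop := ∃ a, x = M.atom a

variable (M) in
def AtomLT [LT A] (x y : M.H) : Prop := ∃ a b : A, x = M.atom a ∧ y = M.atom b ∧ a < b

theorem isAtom_atom (a : A) : M.IsAtom (M.atom a) := ⟨a, rfl⟩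

theorem notMem_of_isAtom {x : M.H} (hx : M.IsAtom x) (z : M.H) : ¬ M.mem z x := by
  obtain ⟨a, rfl⟩ := hx
  exact M.mem_atom a z

theorem eq_of_mem_iff {x y : M.H} (hx : ¬ M.IsAtom x) (hy : ¬ M.IsAtom y)
    (h : ∀ z, M.mem z x ↔ M.mem z y) : x = y :=
  M.ext x y (not_exists.1 hx) (not_exists.1 hy) h

variable (M) in
theorem wellFounded_mem : WellFounded M.mem :=
  ⟨M.minimal {x | Acc M.mem x} (fun a => ⟨_, fun z hz => absurd hz (M.mem_atom a z)⟩)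
    fun _ _ ih => ⟨_, ih⟩⟩

@[elab_as_elim]
theorem induction {motive : M.H → Prop} (atom : ∀ a, motive (M.atom a))
    (set : ∀ x, ¬ M.IsAtom x → (∀ z, M.mem z x → motive z) → motive x) (x : M.H) :
    motive x :=
  M.minimal {x | motive x} atom (fun x hx ih => set x (not_exists.2 hx) ih) x

variable (M) in
noncomputable def mkSet (s : Set M.H) (hs : s.Finite) : M.H := (M.exists_set s hs).choose

theorem not_isAtom_mkSet {s : Set M.H} (hs : s.Finite) : ¬ M.IsAtom (M.mkSet s hs) :=
  not_exists.2 (M.exists_set s hs).choose_spec.1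

theorem mem_mkSet {s : Set M.H} (hs : s.Finite) {z : M.H} : M.mem z (M.mkSet s hs) ↔ z ∈ s :=
  (M.exists_set s hs).choose_spec.2 z

variable (M) in
def support (x : M.H) : Set A := {a | Relation.ReflTransGen M.mem (M.atom a) x}

theorem mem_support_atom (a : A) : a ∈ M.support (M.atom a) := Relation.ReflTransGen.refl

theorem support_atom (a : A) : M.support (M.atom a) = {a} := by
  ext b
  refine ⟨fun hb => ?_, fun hb => hb ▸ Relation.ReflTransGen.refl⟩
  rcases Relation.ReflTransGen.cases_tail hb with hba | ⟨z, -, hz⟩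
  · exact M.atom_inj hba.symm
  · exact absurd hz (M.mem_atom a z)

theorem support_of_not_isAtom {x : M.H} (hx : ¬ M.IsAtom x) :
    M.support x = ⋃ z ∈ {z | M.mem z x}, M.support z := by
  ext a
  simp only [mem_iUnion, exists_prop]
  constructor
  · intro ha
    rcases Relation.ReflTransGen.cases_tail ha with hax | ⟨z, hz, hzx⟩
    · exact absurd ⟨a, hax⟩ hx
    · exact ⟨z, hzx, hz⟩
  · rintro ⟨z, hzx, hz⟩
    exact hz.tail hzx

theorem support_subset_of_mem {x z : M.H} (h : M.mem z x) : M.support z ⊆ M.support x :=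
  fun _ ha => Relation.ReflTransGen.tail ha h

theorem support_finite (x : M.H) : (M.support x).Finite := by
  induction x using HFModel.induction with
  | atom a => simp [support_atom]
  | set x hx ih =>
    rw [support_of_not_isAtom hx]
    exact (M.finite_mem x).biUnion ih

variable (M N) in
open Classical in
noncomputable def lift (h : A → B) : M.H → N.H :=
  M.wellFounded_mem.fix fun x rec =>
    if hx : M.IsAtom x then N.atom (h hx.choose)
    else N.mkSet (range fun z : {z | M.mem z x} => rec z z.2)
      (@finite_range _ _ _ (M.finite_mem x).to_subtype)

variable {h : A → B}

@[simp]
theorem lift_atom (a : A) : M.lift N h (M.atom a) = N.atom (h a) := by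
  rw [lift, WellFounded.fix_eq, dif_pos (isAtom_atom a)]
  exact congrArg _ (congrArg h (M.atom_inj (isAtom_atom a).choose_spec).symm)

theorem lift_of_not_isAtom {x : M.H} (hx : ¬ M.IsAtom x) :
    M.lift N h x = N.mkSet (range fun z : {z | M.mem z x} => M.lift N h z)
      (@finite_range _ _ _ (M.finite_mem x).to_subtype) := by
  rw [lift, WellFounded.fix_eq, dif_neg hx]

@[simp]
theorem isAtom_lift_iff {x : M.H} : N.IsAtom (M.lift N h x) ↔ M.IsAtom x := by
  refine ⟨fun hlx => ?_, fun ⟨a, hx⟩ => hx ▸ lift_atom a ▸ isAtom_atom (h a)⟩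
  by_contra hx
  exact not_isAtom_mkSet _ (lift_of_not_isAtom hx ▸ hlx)

theorem mem_lift {x : M.H} {w : N.H} :
    N.mem w (M.lift N h x) ↔ ∃ z, M.mem z x ∧ M.lift N h z = w := by
  by_cases hx : M.IsAtom x
  · exact iff_of_false (notMem_of_isAtom (isAtom_lift_iff.2 hx) w)
      fun ⟨z, hz, _⟩ => notMem_of_isAtom hx z hz
  · rw [lift_of_not_isAtom hx, mem_mkSet]
    simp

theorem support_lift (x : M.H) : N.support (M.lift N h x) = h '' M.support x := by
  induction x using HFModel.induction with
  | atom a => simp [support_atom]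
  | set x hx ih =>
    rw [support_of_not_isAtom (mt isAtom_lift_iff.1 hx), support_of_not_isAtom hx, image_iUnion₂]
    ext b
    simp only [mem_iUnion, mem_lift, exists_prop]
    constructor
    · rintro ⟨_, ⟨z, hz, rfl⟩, hb⟩
      exact ⟨z, hz, ih z hz ▸ hb⟩
    · rintro ⟨z, hz, hb⟩
      exact ⟨_, ⟨z, hz, rfl⟩, (ih z hz).symm ▸ hb⟩

theorem lift_congr {h' : A → B} {s : Set A} (hh : EqOn h h' s) {x : M.H}
    (hx : M.support x ⊆ s) : M.lift N h x = M.lift N h' x := by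
  induction x using HFModel.induction with
  | atom a => rw [lift_atom, lift_atom, hh (hx (mem_support_atom a))]
  | set x hxa ih =>
    refine eq_of_mem_iff (by simpa) (by simpa) fun w => ?_
    simp only [mem_lift]
    exact exists_congr fun z => and_congr_right fun hz => by
      rw [ih z hz ((support_subset_of_mem hz).trans hx)]

theorem lift_lift {K : HFModel C} {g : B → C} (x : M.H) :
    N.lift K g (M.lift N h x) = M.lift K (g ∘ h) x := by
  induction x using HFModel.induction with
  | atom a => simp
  | set x hx ih =>
    refine eq_of_mem_iff (by simpa) (by simpa) fun w => ?_
    simp only [mem_lift]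
    constructor
    · rintro ⟨_, ⟨z, hz, rfl⟩, rfl⟩
      exact ⟨z, hz, (ih z hz).symm⟩
    · rintro ⟨z, hz, rfl⟩
      exact ⟨_, ⟨z, hz, rfl⟩, ih z hz⟩

theorem lift_id (x : M.H) : M.lift M id x = x := by
  induction x using HFModel.induction with
  | atom a => simp
  | set x hx ih =>
    refine eq_of_mem_iff (by simpa) hx fun w => ?_
    rw [mem_lift]
    exact ⟨by rintro ⟨z, hz, rfl⟩; rwa [ih z hz], fun hw => ⟨w, hw, ih w hw⟩⟩

theorem lift_lift_of_leftInvOn {g : B → A} {s : Set A} (hgh : LeftInvOn g h s) {x : M.H}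
    (hx : M.support x ⊆ s) : N.lift M g (M.lift N h x) = x := by
  rw [lift_lift, lift_congr hgh.eqOn hx, lift_id]

theorem lift_injOn {s : Set A} (hh : InjOn h s) : InjOn (M.lift N h) {x | M.support x ⊆ s} := by
  intro x hx y hy hxy
  induction x using HFModel.induction generalizing y with
  | atom a =>
    obtain ⟨b, rfl⟩ := isAtom_lift_iff.1 (hxy ▸ isAtom_lift_iff.2 (isAtom_atom a) :
      N.IsAtom (M.lift N h y))
    simp only [lift_atom] at hxy
    rw [hh (hx (mem_support_atom a)) (hy (mem_support_atom b)) (N.atom_inj hxy)]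
  | set x hxa ih =>
    have hya : ¬ M.IsAtom y := fun hya => hxa (isAtom_lift_iff.1 (hxy ▸ isAtom_lift_iff.2 hya))
    have hsub {u v : M.H} (huv : M.mem u v) (hv : M.support v ⊆ s) : M.support u ⊆ s :=
      (support_subset_of_mem huv).trans hv
    refine eq_of_mem_iff hxa hya fun z => ⟨fun hz => ?_, fun hz => ?_⟩
    · obtain ⟨w, hw, hwz⟩ := mem_lift.1 (hxy ▸ mem_lift.2 ⟨z, hz, rfl⟩ : N.mem _ (M.lift N h y))
      rwa [ih z hz (hsub hz hx) (hsub hw hy) hwz.symm]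
    · obtain ⟨w, hw, hwz⟩ := mem_lift.1 (hxy ▸ mem_lift.2 ⟨z, hz, rfl⟩ : N.mem _ (M.lift N h x))
      rwa [← ih w hw (hsub hw hx) (hsub hz hy) hwz]

theorem lift_mem_lift_iff {s : Set A} (hh : InjOn h s) {x y : M.H} (hx : M.support x ⊆ s)
    (hy : M.support y ⊆ s) : N.mem (M.lift N h x) (M.lift N h y) ↔ M.mem x y := by
  rw [mem_lift]
  exact ⟨fun ⟨z, hz, hzx⟩ => lift_injOn hh ((support_subset_of_mem hz).trans hy) hx hzx ▸ hz,
    fun hxy => ⟨x, hxy, rfl⟩⟩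

theorem atomLT_lift_iff [LinearOrder A] [Preorder B] {s : Set A} (hh : StrictMonoOn h s)
    {x y : M.H} (hx : M.support x ⊆ s) (hy : M.support y ⊆ s) :
    N.AtomLT (M.lift N h x) (M.lift N h y) ↔ M.AtomLT x y := by
  constructor
  · rintro ⟨a', b', hx', hy', hab⟩
    obtain ⟨a, rfl⟩ := isAtom_lift_iff.1 ⟨a', hx'⟩
    obtain ⟨b, rfl⟩ := isAtom_lift_iff.1 ⟨b', hy'⟩
    rw [lift_atom] at hx' hy'
    rw [← N.atom_inj hx', ← N.atom_inj hy'] at hab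
    exact ⟨a, b, rfl, rfl, (hh.lt_iff_lt (hx (mem_support_atom a))
      (hy (mem_support_atom b))).1 hab⟩
  · rintro ⟨a, b, rfl, rfl, hab⟩
    exact ⟨h a, h b, lift_atom a, lift_atom b,
      hh (hx (mem_support_atom a)) (hy (mem_support_atom b)) hab⟩

end HFModel

namespace FirstOrder.Language.Term

variable {L : Language} [L.IsRelational] {α M N : Type*} [L.Structure M] [L.Structure N]

theorem realize_mem_range (t : L.Term α) (v : α → M) : t.realize v ∈ range v := by
  cases t with
  | var a => exact ⟨a, rfl⟩
  | func f => exact isEmptyElim f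

theorem realize_comp (F : M → N) (t : L.Term α) (v : α → M) :
    t.realize (F ∘ v) = F (t.realize v) := by
  cases t with
  | var a => rfl
  | func f => exact isEmptyElim f

end FirstOrder.Language.Term

attribute [local instance] hfStructure

namespace HFModel

variable {A B : Type} [LinearOrder A] [LinearOrder B] {M : HFModel A} {N : HFModel B} {h : A → B}
  {s : Set A}

theorem relMap_lift_iff (hh : StrictMonoOn h s) {l : ℕ} (R : hfLang.Relations l)
    (zs : Fin l → M.H) (hzs : ∀ i, M.support (zs i) ⊆ s) :
    Structure.RelMap R (M.lift N h ∘ zs) ↔ Structure.RelMap R zs :=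
  match l, R with
  | 1, () => isAtom_lift_iff
  | 2, (0 : Fin 2) => lift_mem_lift_iff hh.injOn (hzs 0) (hzs 1)
  | 2, (1 : Fin 2) => atomLT_lift_iff hh (hzs 0) (hzs 1)

theorem exists_lift_eq [DenselyOrdered A] [NoMinOrder A] [NoMaxOrder A] [Nonempty A]
    [Nonempty B] (hs : s.Finite) (hh : StrictMonoOn h s) (y : N.H) :
    ∃ h' : A → B, ∃ x : M.H, StrictMonoOn h' (s ∪ M.support x) ∧ EqOn h' h s ∧
      M.lift N h' x = y := by
  -- extend the inverse of `h` to the support of `y`, and invert the extension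
  obtain ⟨g, hg, hgh⟩ := hh.invFunOn.exists_extend (hs.image h) (N.support_finite y)
  have hgh' : LeftInvOn g h s := fun a ha =>
    (hgh (mem_image_of_mem h ha)).trans (hh.injOn.leftInvOn_invFunOn ha)
  have hinv := hg.injOn.leftInvOn_invFunOn
  refine ⟨Function.invFunOn g (h '' s ∪ N.support y), N.lift M g y, hg.invFunOn.mono ?_,
    fun a ha => ?_, lift_lift_of_leftInvOn hinv subset_union_right⟩
  · rw [support_lift]
    exact union_subset (fun a ha => ⟨h a, Or.inl (mem_image_of_mem h ha), hgh' ha⟩)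
      (image_mono subset_union_right)
  · conv_lhs => rw [← hgh' ha]
    exact hinv (Or.inl (mem_image_of_mem h ha))

theorem support_realize_subset {α : Type} {n : ℕ} {v : α → M.H} {xs : Fin n → M.H}
    (hv : ∀ a, M.support (v a) ⊆ s) (hxs : ∀ i, M.support (xs i) ⊆ s)
    (t : hfLang.Term (α ⊕ Fin n)) : M.support (t.realize (Sum.elim v xs)) ⊆ s := by
  obtain ⟨a | i, ha⟩ := t.realize_mem_range (Sum.elim v xs) <;> rw [← ha]
  exacts [hv a, hxs i]

theorem realize_lift_iff [DenselyOrdered A] [NoMinOrder A] [NoMaxOrder A] [Nonempty A]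
    [DenselyOrdered B] [NoMinOrder B] [NoMaxOrder B] [Nonempty B] {α : Type} {n : ℕ}
    (φ : hfLang.BoundedFormula α n) (hs : s.Finite) (hh : StrictMonoOn h s) {v : α → M.H}
    {xs : Fin n → M.H} (hv : ∀ a, M.support (v a) ⊆ s) (hxs : ∀ i, M.support (xs i) ⊆ s) :
    φ.Realize (M.lift N h ∘ v) (M.lift N h ∘ xs) ↔ φ.Realize v xs := by
  induction φ generalizing s h with
  | falsum => exact Iff.rfl
  | equal t₁ t₂ =>
    simp only [BoundedFormula.Realize, ← Sum.comp_elim, Term.realize_comp]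
    exact (lift_injOn hh.injOn).eq_iff (support_realize_subset hv hxs t₁)
      (support_realize_subset hv hxs t₂)
  | rel R ts =>
    simp only [BoundedFormula.Realize, ← Sum.comp_elim, Term.realize_comp]
    exact relMap_lift_iff hh R _ fun i => support_realize_subset hv hxs (ts i)
  | imp φ ψ ihφ ihψ => exact imp_congr (ihφ hs hh hv hxs) (ihψ hs hh hv hxs)
  | all φ ih =>
    have key (h' : A → B) (x : M.H) (hh' : StrictMonoOn h' (s ∪ M.support x))
        (hh'h : EqOn h' h s) :
        φ.Realize (M.lift N h ∘ v) (Fin.snoc (M.lift N h ∘ xs) (M.lift N h' x)) ↔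
          φ.Realize v (Fin.snoc xs x) := by
      have hv' : M.lift N h' ∘ v = M.lift N h ∘ v := funext fun a => lift_congr hh'h (hv a)
      have hxs' : M.lift N h' ∘ xs = M.lift N h ∘ xs := funext fun i => lift_congr hh'h (hxs i)
      rw [← hv', ← hxs', ← Fin.comp_snoc]
      refine ih (hs.union (M.support_finite x)) hh' (fun a => (hv a).trans subset_union_left)
        fun i => ?_
      induction i using Fin.lastCases with
      | last => simpa only [Fin.snoc_last] using subset_union_right
      | cast i => simpa only [Fin.snoc_castSucc] using (hxs i).trans subset_union_left
    simp only [BoundedFormula.realize_all]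
    constructor
    · intro H x
      obtain ⟨h', hh', hh'h⟩ := hh.exists_extend hs (M.support_finite x)
      exact (key h' x hh' hh'h).1 (H _)
    · intro H y
      obtain ⟨h', x, hh', hh'h, rfl⟩ := exists_lift_eq (M := M) hs hh y
      exact (key h' x hh' hh'h).2 (H x)

end HFModel

/-- For any two infinite sets of atoms `A`, `B`, each densely linearly ordered without
endpoints, the structures `(HF(A), ∈, <_A, A)` and `(HF(B), ∈, <_B, B)` are
elementarily equivalent. -/
theorem hf_dense_atoms_elementarilyEquivalent {A B : Type}
    [LinearOrder A] [LinearOrder B] [DenselyOrdered A] [DenselyOrdered B]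
    [NoMinOrder A] [NoMaxOrder A] [NoMinOrder B] [NoMaxOrder B]
    [Infinite A] [Infinite B]
    (M : HFModel A) (N : HFModel B) :
    @FirstOrder.Language.ElementarilyEquivalent hfLang M.H N.H
      (hfStructure M) (hfStructure N) := by
  refine elementarilyEquivalent_iff.2 fun φ => ?_
  have hφ := HFModel.realize_lift_iff (M := M) (N := N) φ finite_empty
    (subsingleton_empty.strictMonoOn (f := fun _ => Classical.arbitrary B)) (v := default)
    (xs := default) isEmptyElim finZeroElim
  rwa [Subsingleton.elim (M.lift N _ ∘ default) default,
    Subsingleton.elim (M.lift N _ ∘ default) default, Iff.comm] at hφ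
end
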